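/- Let H, Δ, Σ be groups with injective homomorphisms i : H → Δ and j : H → Σ, and let G = Δ *_H Σ be the amalgamated free product (the pushout of i and j), with canonical injective homomorphisms ι_Δ : Δ → G, ι_Σ : Σ → G, and ι_H = ι_Δ ∘ i = ι_Σ ∘ j : H → G. Then for every g ∈ G with g ∉ ι_Σ(Σ), there exists k ∈ G such that g·ι_Σ(Σ)·g⁻¹ ∩ ι_Σ(Σ) ⊆ k·ι_H(H)·k⁻¹; i.e. the intersection of ι_Σ(Σ) with any conjugate of itself by an element outside of it is contained in a conjugate of the amalgamated subgroup. -/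

import Mathlib

/-!
Write `g = h w x` with `h` in the base, `w` a reduced word whose last letter does not lie in
`G i`, and `x ∈ G i` (take the normal form of `g` and split off its last letter if it lies in
`G i`). Then `g (G i) g⁻¹ = u (G i) u⁻¹` for `u = h w`. For `a ∈ G i` outside the base,
`w a w⁻¹` is a reduced word of length at least three, and a reduced word of length at least two
lies in no factor. Hence `u (G i) u⁻¹ ∩ G i ⊆ u H u⁻¹`.
-/

namespace Subgroup.IsComplement

theorem eq_one_of_mem_of_mem {G : Type*} [Group G] {S T : Set G} (h : IsComplement S T)
    (hS : 1 ∈ S) (hT : 1 ∈ T) {g : G} (hgS : g ∈ S) (hgT : g ∈ T) : g = 1 :=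
  congrArg Subtype.val ((h.equiv_fst_eq_self_of_mem_of_one_mem hT hgS).symm.trans
    (h.equiv_fst_eq_one_of_mem_of_one_mem hS hgT))

end Subgroup.IsComplement

namespace Monoid.CoprodI.NeWord

variable {ι : Type*}

section Monoid

variable {M : ι → Type*} [∀ i, Monoid (M i)]

theorem prod_eq_list_prod {i j : ι} (w : NeWord M i j) :
    w.prod = (w.toList.map fun p => of p.2).prod :=
  rfl

theorem toList_eq_singleton_or_exists_toList_eq_append {i j : ι} (w : NeWord M i j) :
    (i = j ∧ w.toList = [⟨j, w.last⟩]) ∨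
      ∃ k, k ≠ j ∧ ∃ w' : NeWord M i k, w.toList = w'.toList ++ [⟨j, w.last⟩] := by
  induction w with
  | singleton x hx => exact .inl ⟨rfl, rfl⟩
  | append w₁ hne w₂ _ ih =>
    right
    rcases ih with ⟨rfl, h⟩ | ⟨k, hk, w', h⟩
    · exact ⟨_, hne, w₁, by simp [h]⟩
    · exact ⟨k, hk, w₁.append hne w', by simp [h]⟩

end Monoid

theorem mem_toList_inv {G : ι → Type*} [∀ i, Group (G i)] {i j : ι} {w : NeWord G i j}
    {p : Σ i, G i} (hp : p ∈ w.inv.toList) : ⟨p.1, p.2⁻¹⟩ ∈ w.toList := by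
  induction w with
  | singleton x hx =>
    simp only [inv, toList, List.mem_singleton] at hp
    subst hp
    simp
  | append w₁ hne w₂ ih₁ ih₂ =>
    simp only [inv, toList, List.mem_append] at hp ⊢
    exact hp.elim (Or.inr ∘ ih₂) (Or.inl ∘ ih₁)

end Monoid.CoprodI.NeWord

namespace Monoid.PushoutI

variable {ι H : Type*} {G : ι → Type*} [Group H] [∀ i, Group (G i)] {φ : ∀ i, H →* G i}

theorem base_mem_range_of (i : ι) (h : H) : base φ h ∈ (of (φ := φ) i).range :=
  ⟨φ i h, of_apply_eq_base φ i h⟩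

theorem NormalWord.reduced {d : NormalWord.Transversal φ} (w : NormalWord d) :
    Reduced φ w.toWord := by
  rintro ⟨i, g⟩ hg ⟨c, hc⟩
  exact w.ne_one _ hg <| (d.compl i).eq_one_of_mem_of_mem (one_mem _) (d.one_mem i) ⟨c, hc⟩
    (w.normalized i _ hg)

theorem Reduced.ofCoprodI_prod_notMem_range_of_fstIdx_ne (hφ : ∀ i, Function.Injective (φ i))
    {w : CoprodI.Word G} (hw : Reduced φ w) (hne : w ≠ .empty) {i : ι}
    (hi : w.fstIdx ≠ some i) : ofCoprodI w.prod ∉ (of (φ := φ) i).range := by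
  rintro ⟨a, ha⟩
  by_cases haH : a ∈ (φ i).range
  · obtain ⟨c, rfl⟩ := haH
    exact hne (hw.eq_empty_of_mem_range hφ ⟨c, by rw [← ha, of_apply_eq_base]⟩)
  · -- prepending the letter `a⁻¹` gives a nonempty reduced word with trivial product
    have ha1 : a⁻¹ ≠ 1 := fun h => haH (inv_eq_one.mp h ▸ one_mem _)
    have hcons : Reduced φ (CoprodI.Word.cons a⁻¹ w hi ha1) := by
      rintro p (_ | ⟨_, hp⟩)
      · simpa using haH
      · exact hw p hp
    have := hcons.eq_empty_of_mem_range hφ ⟨1, by simp [← ha]⟩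
    simpa [CoprodI.Word.empty] using congrArg CoprodI.Word.toList this

theorem Reduced.ofCoprodI_prod_notMem_range (hφ : ∀ i, Function.Injective (φ i))
    {w : CoprodI.Word G} (hw : Reduced φ w) (hlen : 2 ≤ w.toList.length) (i : ι) :
    ofCoprodI w.prod ∉ (of (φ := φ) i).range := by
  classical
  induction w using CoprodI.Word.consRecOn with
  | empty => simp [CoprodI.Word.empty] at hlen
  | cons j a w hIdx ha1 _ =>
    have hw' : Reduced φ w := fun p hp => hw p (List.mem_cons_of_mem _ hp)
    have hne : w ≠ .empty := by
      rintro rfl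
      simp [CoprodI.Word.empty] at hlen
    by_cases hji : j = i
    · subst hji
      rintro ⟨b, hb⟩
      refine hw'.ofCoprodI_prod_notMem_range_of_fstIdx_ne hφ hne hIdx ⟨a⁻¹ * b, ?_⟩
      rw [map_mul, hb, CoprodI.Word.prod_cons, map_mul, ofCoprodI_of, map_inv,
        inv_mul_cancel_left]
    · refine hw.ofCoprodI_prod_notMem_range_of_fstIdx_ne hφ ?_ (by simpa using hji)
      intro h
      simpa [CoprodI.Word.empty] using congrArg CoprodI.Word.toList h

theorem ofCoprodI_conj_notMem_range (hφ : ∀ i, Function.Injective (φ i)) {k j i : ι}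
    (w : CoprodI.NeWord G k j) (hw : Reduced φ w.toWord) (hji : j ≠ i) {x : G i}
    (hx : x ∉ (φ i).range) :
    ofCoprodI (w.prod * CoprodI.of x * w.prod⁻¹) ∉ (of (φ := φ) i).range := by
  have hx1 : x ≠ 1 := fun h => hx (h ▸ one_mem _)
  let L := (w.append hji (.singleton x hx1)).append hji.symm w.inv
  have hL : Reduced φ L.toWord := by
    intro p hp
    simp only [L, CoprodI.NeWord.toWord, CoprodI.NeWord.toList, List.mem_append,
      List.mem_singleton] at hp
    rcases hp with (hp | rfl) | hp
    · exact hw p hp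
    · exact hx
    · simpa using hw _ (CoprodI.NeWord.mem_toList_inv hp)
  have hlen : 2 ≤ L.toWord.toList.length := by
    have := List.length_pos_of_ne_nil w.toList_ne_nil
    simp only [L, CoprodI.NeWord.toWord, CoprodI.NeWord.toList, List.length_append,
      List.length_singleton]
    omega
  have hprod : L.prod = w.prod * CoprodI.of x * w.prod⁻¹ := by
    simp [L, mul_assoc]
  rw [← hprod]
  exact hL.ofCoprodI_prod_notMem_range hφ hlen i

theorem exists_eq_base_mul_neWord_mul_of (hφ : ∀ i, Function.Injective (φ i)) {i : ι}
    {g : PushoutI φ} (hg : g ∉ (of (φ := φ) i).range) :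
    ∃ (h : H) (k j : ι) (w : CoprodI.NeWord G k j) (x : G i), j ≠ i ∧ Reduced φ w.toWord ∧
      g = base φ h * ofCoprodI w.prod * of i x := by
  classical
  obtain ⟨d⟩ := NormalWord.transversal_nonempty φ hφ
  obtain ⟨n, hgn⟩ : ∃ n : NormalWord d, g = base φ n.head * ofCoprodI n.toWord.prod :=
    ⟨NormalWord.equiv g, (NormalWord.equiv.symm_apply_apply g).symm⟩
  have hne : n.toWord ≠ .empty := by
    intro h
    rw [hgn, h, CoprodI.Word.prod_empty, map_one, mul_one] at hg
    exact hg (base_mem_range_of i _)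
  obtain ⟨k, j, w, hw⟩ := CoprodI.NeWord.of_word _ hne
  have hred : Reduced φ w.toWord := hw ▸ n.reduced
  rw [← hw] at hgn
  by_cases hji : j = i
  · subst hji
    rcases w.toList_eq_singleton_or_exists_toList_eq_append with
      ⟨rfl, hs⟩ | ⟨j', hj', w', hs⟩
    · refine absurd ?_ hg
      rw [hgn, ← CoprodI.NeWord.prod, CoprodI.NeWord.prod_eq_list_prod, hs]
      simpa using mul_mem (base_mem_range_of k _) ⟨w.last, rfl⟩
    · refine ⟨n.head, k, j', w', w.last, hj', fun p hp => hred p ?_, ?_⟩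
      · exact show p ∈ w.toList from hs ▸ List.mem_append_left _ hp
      · rw [hgn, ← CoprodI.NeWord.prod, CoprodI.NeWord.prod_eq_list_prod, hs]
        simp [CoprodI.NeWord.prod_eq_list_prod, mul_assoc]
  · exact ⟨n.head, k, j, w, 1, hji, hred, by rw [hgn, map_one, mul_one]; rfl⟩

theorem exists_map_conj_range_inf_le (hφ : ∀ i, Function.Injective (φ i)) {i : ι}
    {g : PushoutI φ} (hg : g ∉ (of (φ := φ) i).range) :
    ∃ k : PushoutI φ, (of (φ := φ) i).range.map (MulAut.conj g).toMonoidHom ⊓ (of i).range ≤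
      (base φ).range.map (MulAut.conj k).toMonoidHom := by
  obtain ⟨h, k, j, w, x, hji, hw, rfl⟩ := exists_eq_base_mul_neWord_mul_of hφ hg
  refine ⟨base φ h * ofCoprodI w.prod, ?_⟩
  rintro y ⟨⟨_, ⟨a, rfl⟩, rfl⟩, hy⟩
  by_cases ha : x * a * x⁻¹ ∈ (φ i).range
  · obtain ⟨c, hc⟩ := ha
    refine ⟨base φ c, ⟨c, rfl⟩, ?_⟩
    simp only [MulEquiv.coe_toMonoidHom, MulAut.conj_apply]
    simp only [← of_apply_eq_base φ i, hc, map_mul, map_inv]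
    group
  · refine absurd ?_ (ofCoprodI_conj_notMem_range hφ w hw hji ha)
    convert mul_mem (mul_mem (base_mem_range_of i h⁻¹) hy) (base_mem_range_of i h) using 1
    simp only [MulEquiv.coe_toMonoidHom, MulAut.conj_apply]
    simp only [map_mul, map_inv, ofCoprodI_of]
    group

end Monoid.PushoutI

/-- in an amalgamated free product `G = Δ *_H Σ` (the pushout of injective
homomorphisms `i : H → Δ` and `j : H → Σ`), for every `g ∉ ι_Σ(Σ)` there is `k ∈ G` with
`g ι_Σ(Σ) g⁻¹ ∩ ι_Σ(Σ) ⊆ k ι_H(H) k⁻¹`.  Here the two factors are encoded as the family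
`G : Bool → Type*`, with `Δ = G true` and `Σ = G false`, and `Δ *_H Σ = Monoid.PushoutI φ`. -/
theorem amalgam_conj_inter_subset_conj_base {H : Type*} [Group H]
    {G : Bool → Type*} [∀ b, Group (G b)]
    (φ : ∀ b, H →* G b) (hφ : ∀ b, Function.Injective (φ b)) :
    ∀ g : Monoid.PushoutI φ, g ∉ (Monoid.PushoutI.of (φ := φ) false).range →
      ∃ k : Monoid.PushoutI φ,
        Subgroup.map (MulAut.conj g).toMonoidHom (Monoid.PushoutI.of (φ := φ) false).range ⊓
            (Monoid.PushoutI.of (φ := φ) false).range ≤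
          Subgroup.map (MulAut.conj k).toMonoidHom (Monoid.PushoutI.base φ).range :=
  fun _ hg => Monoid.PushoutI.exists_map_conj_range_inf_le hφ hg
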